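/- Let X = ⋂ₙ(Xₙ, ‖·‖ₙ) and Y = ⋂ₙ(Yₙ, |·|ₙ) be compactly graded spaces and f : X → Y continuous, strongly Gâteaux differentiable, with f(0) = 0. Assume there are c > 0 and d ∈ ℕ∪{0} such that for every x ∈ X and v ∈ Y there is u ∈ X with f′(x)u = v and ‖u‖ₙ ≤ c·|v|_{n+d} for all n ≥ 0. Then for every y ∈ Y there exists x ∈ X with f(x) = y and ‖x‖ₙ ≤ c·|y|_{n+d} for all n ≥ 0. -/
import Mathlib
set_option maxHeartbeats 2000000


open Filter Topology Set

/-- The compactly graded space as a submodule of the product: compatible sequences. -/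
def GradedSub (Xc : ℕ → Type*) [∀ n, NormedAddCommGroup (Xc n)] [∀ n, NormedSpace ℝ (Xc n)]
    (ι : ∀ n, Xc (n + 1) →L[ℝ] Xc n) : Submodule ℝ (∀ n, Xc n) where
  carrier := {x | ∀ n, ι n (x (n + 1)) = x n}
  add_mem' := by intro a b ha hb n; simp [ha n, hb n]
  zero_mem' := by intro n; simp
  smul_mem' := by intro c a ha n; simp [ha n]

/-- The `n`-th seminorm (norm of the `n`-th level) on the graded space. -/
noncomputable def gradedNorm {Xc : ℕ → Type*} [∀ n, NormedAddCommGroup (Xc n)]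
    [∀ n, NormedSpace ℝ (Xc n)] (ι : ∀ n, Xc (n + 1) →L[ℝ] Xc n)
    (n : ℕ) (x : GradedSub Xc ι) : ℝ := ‖(x : ∀ m, Xc m) n‖

/-- The Fréchet metric on the graded space. -/
noncomputable def gradedRho {Xc : ℕ → Type*} [∀ n, NormedAddCommGroup (Xc n)]
    [∀ n, NormedSpace ℝ (Xc n)] (ι : ∀ n, Xc (n + 1) →L[ℝ] Xc n)
    (x y : GradedSub Xc ι) : ℝ :=
  ⨆ n, (2 : ℝ)⁻¹ ^ n * gradedNorm ι n (x - y) / (1 + gradedNorm ι n (x - y))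

section NMEHelpers
variable {Xc : ℕ → Type*} [∀ n, NormedAddCommGroup (Xc n)] [∀ n, NormedSpace ℝ (Xc n)]
  (ι : ∀ n, Xc (n + 1) →L[ℝ] Xc n)

lemma NME.gradedNorm_nonneg (n : ℕ) (x : GradedSub Xc ι) : 0 ≤ gradedNorm ι n x := norm_nonneg _

lemma NME.gradedNorm_add_le (n : ℕ) (a b : GradedSub Xc ι) :
    gradedNorm ι n (a + b) ≤ gradedNorm ι n a + gradedNorm ι n b := norm_add_le _ _

lemma NME.gradedNorm_smul (n : ℕ) (t : ℝ) (a : GradedSub Xc ι) :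
    gradedNorm ι n (t • a) = |t| * gradedNorm ι n a := by
  show ‖t • ((a : ∀ m, Xc m) n)‖ = _
  rw [norm_smul, Real.norm_eq_abs]; rfl

lemma NME.gradedNorm_zero (n : ℕ) : gradedNorm ι n (0 : GradedSub Xc ι) = 0 := norm_zero

lemma NME.gradedNorm_sub_rev (n : ℕ) (a b : GradedSub Xc ι) :
    gradedNorm ι n (a - b) = gradedNorm ι n (b - a) := by
  show ‖(a : ∀ m, Xc m) n - (b : ∀ m, Xc m) n‖ = ‖(b : ∀ m, Xc m) n - (a : ∀ m, Xc m) n‖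
  exact norm_sub_rev _ _

lemma NME.term_le_one (n : ℕ) (x y : GradedSub Xc ι) :
    (2 : ℝ)⁻¹ ^ n * gradedNorm ι n (x - y) / (1 + gradedNorm ι n (x - y)) ≤ 1 := by
  set a := gradedNorm ι n (x - y) with ha
  have h0 : 0 ≤ a := NME.gradedNorm_nonneg ι n _
  have h1 : (2 : ℝ)⁻¹ ^ n ≤ 1 := pow_le_one₀ (by norm_num) (by norm_num)
  rw [div_le_one (by linarith)]
  nlinarith [pow_nonneg (by norm_num : (0:ℝ) ≤ (2:ℝ)⁻¹) n]

lemma NME.rho_bdd (x y : GradedSub Xc ι) :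
    BddAbove (Set.range fun n =>
      (2 : ℝ)⁻¹ ^ n * gradedNorm ι n (x - y) / (1 + gradedNorm ι n (x - y))) :=
  ⟨1, by rintro r ⟨n, rfl⟩; exact NME.term_le_one ι n x y⟩

lemma NME.rho_nonneg (x y : GradedSub Xc ι) : 0 ≤ gradedRho ι x y :=
  Real.iSup_nonneg fun n => by
    have h0 : 0 ≤ gradedNorm ι n (x - y) := NME.gradedNorm_nonneg ι n _
    positivity

lemma NME.term_le_rho (x y : GradedSub Xc ι) (n : ℕ) :
    (2 : ℝ)⁻¹ ^ n * gradedNorm ι n (x - y) / (1 + gradedNorm ι n (x - y)) ≤ gradedRho ι x y :=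
  le_ciSup (NME.rho_bdd ι x y) n

/-- from a bound on rho, a bound on the level-`n` seminorm. -/
lemma NME.norm_le_of_rho {x y : GradedSub Xc ι} {n : ℕ} {r : ℝ}
    (h : gradedRho ι x y ≤ r) (hr : 2 ^ n * r ≤ 1 / 2) :
    gradedNorm ι n (x - y) ≤ 2 ^ (n + 1) * r := by
  set a := gradedNorm ι n (x - y) with ha
  have h0 : 0 ≤ a := NME.gradedNorm_nonneg ι n _
  have h2 : (2 : ℝ)⁻¹ ^ n * a / (1 + a) ≤ r := le_trans (NME.term_le_rho ι x y n) h
  have hq : a / (1 + a) ≤ 2 ^ n * r := by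
    have hpow : (2 : ℝ)⁻¹ ^ n * (2:ℝ) ^ n = 1 := by
      rw [← mul_pow]; norm_num
    have := mul_le_mul_of_nonneg_left h2 (by positivity : (0:ℝ) ≤ (2:ℝ) ^ n)
    have hpow2 : (2:ℝ) ^ n * (2 : ℝ)⁻¹ ^ n = 1 := by rw [← mul_pow]; norm_num
    calc a / (1 + a) = 2 ^ n * ((2 : ℝ)⁻¹ ^ n * a / (1 + a)) := by
          rw [← mul_div_assoc, ← mul_assoc, hpow2, one_mul]
      _ ≤ 2 ^ n * r := this
  have h3 : a ≤ 2 * (2 ^ n * r) := by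
    rw [div_le_iff₀ (by linarith)] at hq
    nlinarith
  calc a ≤ 2 * (2 ^ n * r) := h3
    _ = 2 ^ (n + 1) * r := by ring

lemma NME.rho_le_max {x y : GradedSub Xc ι} {N : ℕ} {δ : ℝ} (hδ : 0 ≤ δ)
    (h : ∀ n < N, gradedNorm ι n (x - y) ≤ δ) :
    gradedRho ι x y ≤ max δ ((2 : ℝ)⁻¹ ^ N) := by
  refine ciSup_le fun n => ?_
  set a := gradedNorm ι n (x - y) with ha
  have h0 : 0 ≤ a := NME.gradedNorm_nonneg ι n _
  rcases lt_or_ge n N with hn | hn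
  · refine le_trans ?_ (le_max_left _ _)
    have h1 : (2 : ℝ)⁻¹ ^ n ≤ 1 := pow_le_one₀ (by norm_num) (by norm_num)
    have h2 : a / (1 + a) ≤ a := by
      rw [div_le_iff₀ (by linarith)]; nlinarith
    calc (2 : ℝ)⁻¹ ^ n * a / (1 + a) ≤ 1 * a / (1 + a) := by
          apply div_le_div_of_nonneg_right ?_ (by linarith)
          · exact mul_le_mul_of_nonneg_right h1 h0
      _ = a / (1 + a) := by ring_nf
      _ ≤ a := h2
      _ ≤ δ := h n hn
  · refine le_trans ?_ (le_max_right _ _)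
    have h2 : a / (1 + a) ≤ 1 := by rw [div_le_one (by linarith)]; linarith
    have h3 : (2 : ℝ)⁻¹ ^ n ≤ (2 : ℝ)⁻¹ ^ N :=
      pow_le_pow_of_le_one (by norm_num) (by norm_num) hn
    calc (2 : ℝ)⁻¹ ^ n * a / (1 + a) = (2 : ℝ)⁻¹ ^ n * (a / (1 + a)) := by ring
      _ ≤ (2 : ℝ)⁻¹ ^ N * 1 := by
          apply mul_le_mul h3 h2 (by positivity) (by positivity)
      _ = (2 : ℝ)⁻¹ ^ N := mul_one _

/-- levelwise convergence implies convergence in the Fréchet metric. -/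
lemma NME.rho_tendsto_zero {z : GradedSub Xc ι} {w : ℕ → GradedSub Xc ι}
    (h : ∀ n, Tendsto (fun k => gradedNorm ι n (z - w k)) atTop (𝓝 0)) :
    Tendsto (fun k => gradedRho ι z (w k)) atTop (𝓝 0) := by
  rw [Metric.tendsto_atTop]
  intro ε hε
  obtain ⟨N, hN⟩ := exists_pow_lt_of_lt_one hε (by norm_num : (2:ℝ)⁻¹ < 1)
  have hev : ∀ᶠ k in atTop, ∀ n ∈ Finset.range N, gradedNorm ι n (z - w k) ≤ ε / 2 := by
    rw [Filter.eventually_all_finset]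
    intro n _
    exact ((h n).eventually_le_const (by linarith))
  obtain ⟨K, hK⟩ := hev.exists_forall_of_atTop
  refine ⟨K, fun k hk => ?_⟩
  rw [Real.dist_eq, sub_zero, abs_of_nonneg (NME.rho_nonneg ι _ _)]
  have := NME.rho_le_max ι (by linarith : (0:ℝ) ≤ ε / 2)
    (fun n hn => hK k hk n (Finset.mem_range.mpr hn))
  calc gradedRho ι z (w k) ≤ max (ε / 2) ((2:ℝ)⁻¹ ^ N) := this
    _ < ε := max_lt (by linarith) hN

/-- rho convergence implies levelwise convergence. -/
lemma NME.level_tendsto_of_rho {z : GradedSub Xc ι} {w : ℕ → GradedSub Xc ι}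
    (h : Tendsto (fun k => gradedRho ι z (w k)) atTop (𝓝 0)) (n : ℕ) :
    Tendsto (fun k => gradedNorm ι n (z - w k)) atTop (𝓝 0) := by
  have hb : Tendsto (fun k => 2 ^ (n + 1) * gradedRho ι z (w k)) atTop (𝓝 0) := by
    simpa using h.const_mul (2 ^ (n + 1) : ℝ)
  apply squeeze_zero' (Eventually.of_forall fun k => NME.gradedNorm_nonneg ι n _) ?_ hb
  have hsmall : ∀ᶠ k in atTop, 2 ^ n * gradedRho ι z (w k) ≤ 1 / 2 := by
    have := (h.const_mul (2 ^ n : ℝ))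
    simp only [mul_zero] at this
    exact this.eventually_le_const (by norm_num)
  filter_upwards [hsmall] with k hk
  exact NME.norm_le_of_rho ι le_rfl hk

/-- sequential compactness of boxes in the graded space. -/
lemma NME.graded_seq_compact (hι : ∀ n, IsCompactOperator (ι n)) (R : ℕ → ℝ)
    (u : ℕ → GradedSub Xc ι) (hu : ∀ k n, gradedNorm ι n (u k) ≤ R n) :
    ∃ z : GradedSub Xc ι, (∀ n, gradedNorm ι n z ≤ R n) ∧ ∃ φ : ℕ → ℕ, StrictMono φ ∧
      ∀ n, Tendsto (fun k => gradedNorm ι n (z - u (φ k))) atTop (𝓝 0) := by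
  set S : Set (∀ n, Xc n) :=
    {v : ∀ n, Xc n | (∀ n, ι n (v (n+1)) = v n) ∧ ∀ n, ‖v n‖ ≤ R n} with hS
  have hCcpt : ∀ n, IsCompact (closure ((ι n) '' Metric.closedBall 0 (R (n+1)))) := fun n =>
    IsCompactOperator.isCompact_closure_image_closedBall (𝕜₁ := ℝ)
      (f := (ι n).toLinearMap) (hι n) (R (n+1))
  have hsub : S ⊆ Set.pi univ fun n => closure ((ι n) '' Metric.closedBall 0 (R (n+1))) := by
    rintro v ⟨h1, h2⟩ n _
    refine subset_closure ⟨v (n+1), ?_, h1 n⟩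
    simpa [Metric.mem_closedBall, dist_eq_norm] using h2 (n+1)
  have hclosed : IsClosed S := by
    have : S = (⋂ n, {v : ∀ n, Xc n | ι n (v (n+1)) = v n}) ∩
        ⋂ n, {v : ∀ n, Xc n | ‖v n‖ ≤ R n} := by
      ext v; simp [hS, Set.mem_iInter, forall_and]
    rw [this]
    refine IsClosed.inter (isClosed_iInter fun n => ?_) (isClosed_iInter fun n => ?_)
    · exact isClosed_eq ((ι n).continuous.comp (continuous_apply (n+1))) (continuous_apply n)
    · exact isClosed_le (continuous_norm.comp (continuous_apply n)) continuous_const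
  have hScpt : IsCompact S :=
    IsCompact.of_isClosed_subset (isCompact_univ_pi hCcpt) hclosed hsub
  have hmem : ∀ k, ((u k : ∀ n, Xc n)) ∈ S := fun k => ⟨(u k).2, fun n => hu k n⟩
  obtain ⟨v, hvS, φ, hφ, htend⟩ := hScpt.isSeqCompact hmem
  refine ⟨⟨v, hvS.1⟩, fun n => hvS.2 n, φ, hφ, fun n => ?_⟩
  have hcoord : Tendsto (fun k => (u (φ k) : ∀ m, Xc m) n) atTop (𝓝 (v n)) :=
    tendsto_pi_nhds.mp htend n
  have := tendsto_iff_norm_sub_tendsto_zero.mp hcoord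
  refine this.congr fun k => ?_
  exact norm_sub_rev _ _

end NMEHelpers

/-- Nash–Moser–Ekeland type surjectivity with uniform tame estimates:
`X`, `Y` compactly graded spaces, `f : X → Y` continuous, strongly Gâteaux
differentiable, `f 0 = 0`; if for each `x, v` the linearized equation `f′(x)u = v` has a
solution with `‖u‖ₙ ≤ c·|v|_{n+d}` for all `n`, then for every `y` the equation `f x = y`
has a solution with `‖x‖ₙ ≤ c·|y|_{n+d}` for all `n`. -/
theorem stmt15 (Xc Yc : ℕ → Type*)
    [∀ n, NormedAddCommGroup (Xc n)] [∀ n, NormedSpace ℝ (Xc n)] [∀ n, CompleteSpace (Xc n)]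
    [∀ n, NormedAddCommGroup (Yc n)] [∀ n, NormedSpace ℝ (Yc n)] [∀ n, CompleteSpace (Yc n)]
    (ι : ∀ n, Xc (n + 1) →L[ℝ] Xc n) (κ : ∀ n, Yc (n + 1) →L[ℝ] Yc n)
    (hιinj : ∀ n, Function.Injective (ι n)) (hκinj : ∀ n, Function.Injective (κ n))
    (hιcpt : ∀ n, IsCompactOperator (ι n)) (hκcpt : ∀ n, IsCompactOperator (κ n))
    (f : GradedSub Xc ι → GradedSub Yc κ)
    -- `f` is continuous with respect to the Fréchet metrics:
    (hfc : ∀ x : GradedSub Xc ι, ∀ ε > (0 : ℝ), ∃ δ > (0 : ℝ),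
      ∀ x', gradedRho ι x x' < δ → gradedRho κ (f x) (f x') < ε)
    (hf0 : f 0 = 0)
    -- the strong Gâteaux derivative of `f`: a bounded (continuous) linear operator
    (Df : GradedSub Xc ι → (GradedSub Xc ι →ₗ[ℝ] GradedSub Yc κ))
    (hDfbdd : ∀ x, ∀ ε > (0 : ℝ), ∃ δ > (0 : ℝ), ∀ h h',
      gradedRho ι h h' < δ → gradedRho κ (Df x h) (Df x h') < ε)
    (hDf : ∀ x h, Tendsto
      (fun t : ℝ => gradedRho κ (f (x + t • h) - f x) (t • Df x h) / t)
      (𝓝[>] (0 : ℝ)) (𝓝 0))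
    (c : ℝ) (hc : 0 < c) (d : ℕ)
    (hsolve : ∀ x v, ∃ u, Df x u = v ∧ ∀ n, gradedNorm ι n u ≤ c * gradedNorm κ (n + d) v) :
    ∀ y, ∃ x, f x = y ∧ ∀ n, gradedNorm ι n x ≤ c * gradedNorm κ (n + d) y := by
  intro y
  set β : ℕ → ℝ := fun n => c * gradedNorm κ (n + d) y with hβ
  have hβ0 : ∀ n, 0 ≤ β n := fun n => mul_nonneg hc.le (NME.gradedNorm_nonneg κ _ _)
  -- continuity of f along sequences, in rho
  have fcont : ∀ (z : GradedSub Xc ι) (w : ℕ → GradedSub Xc ι),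
      Tendsto (fun k => gradedRho ι z (w k)) atTop (𝓝 0) →
      Tendsto (fun k => gradedRho κ (f z) (f (w k))) atTop (𝓝 0) := by
    intro z w h
    rw [Metric.tendsto_atTop]
    intro ε hε
    obtain ⟨δ, hδ, hδ2⟩ := hfc z ε hε
    obtain ⟨N, hN⟩ := (Metric.tendsto_atTop.mp h) δ hδ
    refine ⟨N, fun k hk => ?_⟩
    have h1 : gradedRho ι z (w k) < δ := by
      have := hN k hk
      rwa [Real.dist_eq, sub_zero, abs_of_nonneg (NME.rho_nonneg ι _ _)] at this
    have := hδ2 (w k) h1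
    rwa [Real.dist_eq, sub_zero, abs_of_nonneg (NME.rho_nonneg κ _ _)]
  -- the key approximation step
  have key : ∀ (m : ℕ) (ε : ℝ), 0 < ε → ε ≤ 1 →
      ∃ x : GradedSub Xc ι, (∀ n, gradedNorm ι n x ≤ β n) ∧
        ∀ j ≤ m, gradedNorm κ j (f x - y) ≤ ε := by
    intro m ε hε hε1
    set T : Set ℝ := {t | t ∈ Icc (0:ℝ) 1 ∧ ∃ x : GradedSub Xc ι,
        (∀ n, gradedNorm ι n x ≤ t * β n) ∧
        ∀ j ≤ m, gradedNorm κ j (f x - t • y) ≤ ε * t} with hT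
    have h0T : (0:ℝ) ∈ T := by
      refine ⟨⟨le_refl 0, zero_le_one⟩, 0, fun n => ?_, fun j hj => ?_⟩
      · rw [NME.gradedNorm_zero, zero_mul]
      · rw [hf0, zero_smul, sub_zero, NME.gradedNorm_zero, mul_zero]
    have hbdd : BddAbove T := ⟨1, fun t ht => ht.1.2⟩
    set t₀ := sSup T with ht₀
    have ht₀0 : 0 ≤ t₀ := le_csSup hbdd h0T
    have ht₀1 : t₀ ≤ 1 := csSup_le ⟨0, h0T⟩ fun t ht => ht.1.2
    -- closedness: t₀ ∈ T
    have ht₀T : t₀ ∈ T := by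
      obtain ⟨ts, hmono, hlim, hmem⟩ := exists_seq_tendsto_sSup ⟨0, h0T⟩ hbdd
      choose xs hx1 hx2 using fun k => (hmem k).2
      have hts0 : ∀ k, 0 ≤ ts k := fun k => (hmem k).1.1
      have hts1 : ∀ k, ts k ≤ 1 := fun k => (hmem k).1.2
      obtain ⟨z, -, φ, hφ, hconv⟩ := NME.graded_seq_compact ι hιcpt β xs
        (fun k n => le_trans (hx1 k n) (by nlinarith [hβ0 n, hts1 k, hts0 k]))
      have htsφ : Tendsto (fun k => ts (φ k)) atTop (𝓝 t₀) :=
        hlim.comp hφ.tendsto_atTop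
      -- levelwise convergence of f values
      have hρ : Tendsto (fun k => gradedRho ι z (xs (φ k))) atTop (𝓝 0) :=
        NME.rho_tendsto_zero ι hconv
      have hfρ : Tendsto (fun k => gradedRho κ (f z) (f (xs (φ k)))) atTop (𝓝 0) :=
        fcont z _ hρ
      have hflevel : ∀ j, Tendsto (fun k => gradedNorm κ j (f z - f (xs (φ k)))) atTop (𝓝 0) :=
        fun j => NME.level_tendsto_of_rho κ hfρ j
      refine ⟨⟨ht₀0, ht₀1⟩, z, fun n => ?_, fun j hj => ?_⟩
      · -- norm bound by limiting
        have hb : Tendsto (fun k => gradedNorm ι n (z - xs (φ k)) + ts (φ k) * β n)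
            atTop (𝓝 (0 + t₀ * β n)) := (hconv n).add (htsφ.mul_const (β n))
        rw [zero_add] at hb
        refine ge_of_tendsto hb (Eventually.of_forall fun k => ?_)
        calc gradedNorm ι n z
            = gradedNorm ι n ((z - xs (φ k)) + xs (φ k)) := by rw [sub_add_cancel]
          _ ≤ gradedNorm ι n (z - xs (φ k)) + gradedNorm ι n (xs (φ k)) :=
              NME.gradedNorm_add_le ι n _ _
          _ ≤ gradedNorm ι n (z - xs (φ k)) + ts (φ k) * β n := by
              linarith [hx1 (φ k) n]
      · -- error bound by limiting
        have habs : Tendsto (fun k => |ts (φ k) - t₀|) atTop (𝓝 0) := by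
          have := (htsφ.sub_const t₀).abs
          simpa using this
        have hb : Tendsto (fun k => gradedNorm κ j (f z - f (xs (φ k)))
            + ε * ts (φ k) + |ts (φ k) - t₀| * gradedNorm κ j y)
            atTop (𝓝 (0 + ε * t₀ + 0 * gradedNorm κ j y)) :=
          (((hflevel j).add (htsφ.const_mul ε)).add (habs.mul_const _))
        rw [zero_add, zero_mul, add_zero] at hb
        refine ge_of_tendsto hb (Eventually.of_forall fun k => ?_)
        have hdecomp : f z - t₀ • y =
            (f z - f (xs (φ k))) + (f (xs (φ k)) - ts (φ k) • y) + (ts (φ k) - t₀) • y := by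
          module
        calc gradedNorm κ j (f z - t₀ • y)
            ≤ gradedNorm κ j ((f z - f (xs (φ k))) + (f (xs (φ k)) - ts (φ k) • y))
              + gradedNorm κ j ((ts (φ k) - t₀) • y) := by
              rw [hdecomp]; exact NME.gradedNorm_add_le κ j _ _
          _ ≤ gradedNorm κ j (f z - f (xs (φ k))) + gradedNorm κ j (f (xs (φ k)) - ts (φ k) • y)
              + |ts (φ k) - t₀| * gradedNorm κ j y := by
              rw [NME.gradedNorm_smul]
              linarith [NME.gradedNorm_add_le κ j (f z - f (xs (φ k))) (f (xs (φ k)) - ts (φ k) • y)]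
          _ ≤ gradedNorm κ j (f z - f (xs (φ k))) + ε * ts (φ k)
              + |ts (φ k) - t₀| * gradedNorm κ j y := by
              linarith [hx2 (φ k) j hj]
    -- now show t₀ = 1
    rcases eq_or_lt_of_le ht₀1 with h1 | h1
    · obtain ⟨-, x, hx1, hx2⟩ := ht₀T
      refine ⟨x, fun n => ?_, fun j hj => ?_⟩
      · have := hx1 n; rwa [h1, one_mul] at this
      · have := hx2 j hj; rwa [h1, one_smul, mul_one] at this
    · exfalso
      obtain ⟨-, x, hx1, hx2⟩ := ht₀T
      obtain ⟨u, hu1, hu2⟩ := hsolve x y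
      set η : ℝ := ε / 2 ^ (m + 1) with hη
      have hηpos : 0 < η := by positivity
      have hev1 : ∀ᶠ s in 𝓝[>] (0:ℝ),
          gradedRho κ (f (x + s • u) - f x) (s • Df x u) / s < η :=
        (hDf x u).eventually (gt_mem_nhds hηpos)
      have hev2 : ∀ᶠ s in 𝓝[>] (0:ℝ), s < 1 - t₀ :=
        eventually_nhdsWithin_of_eventually_nhds (gt_mem_nhds (by linarith : (0:ℝ) < 1 - t₀))
      have hev3 : ∀ᶠ s in 𝓝[>] (0:ℝ), 0 < s := eventually_mem_nhdsWithin
      obtain ⟨s, hsρ, hslt, hspos⟩ := (hev1.and (hev2.and hev3)).exists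
      have hsle1 : s ≤ 1 := by linarith
      -- the rho bound
      have hρbound : gradedRho κ (f (x + s • u) - f x) (s • y) ≤ η * s := by
        rw [← hu1]
        have := (div_lt_iff₀ hspos).mp hsρ
        linarith
      -- levelwise bound on the remainder
      have hrem : ∀ j ≤ m, gradedNorm κ j ((f (x + s • u) - f x) - s • y) ≤ ε * s := by
        intro j hj
        have h2j : (2:ℝ) ^ j ≤ 2 ^ m := pow_le_pow_right₀ (by norm_num) hj
        have hhalf : 2 ^ j * (η * s) ≤ 1 / 2 := by
          have : (2:ℝ) ^ j * (η * s) ≤ 2 ^ m * (ε / 2 ^ (m+1) * s) := by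
            apply mul_le_mul h2j le_rfl (by positivity) (by positivity)
          have h2m : (2:ℝ) ^ m * (ε / 2 ^ (m+1) * s) = ε * s / 2 := by
            rw [pow_succ]; field_simp
          nlinarith
        have := NME.norm_le_of_rho κ hρbound hhalf
        calc gradedNorm κ j ((f (x + s • u) - f x) - s • y) ≤ 2 ^ (j + 1) * (η * s) := this
          _ ≤ 2 ^ (m + 1) * (η * s) := by
              apply mul_le_mul_of_nonneg_right (pow_le_pow_right₀ (by norm_num) (by omega))
              positivity
          _ = ε * s := by rw [hη]; field_simp
      -- new witness
      have hmemT : t₀ + s ∈ T := by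
        refine ⟨⟨by linarith, by linarith⟩, x + s • u, fun n => ?_, fun j hj => ?_⟩
        · calc gradedNorm ι n (x + s • u)
              ≤ gradedNorm ι n x + gradedNorm ι n (s • u) := NME.gradedNorm_add_le ι n _ _
            _ = gradedNorm ι n x + |s| * gradedNorm ι n u := by rw [NME.gradedNorm_smul]
            _ ≤ t₀ * β n + s * β n := by
                rw [abs_of_pos hspos]
                have hun : gradedNorm ι n u ≤ β n := hu2 n
                have hβn := hx1 n
                nlinarith [hβ0 n]
            _ = (t₀ + s) * β n := by ring
        · have hdecomp : f (x + s • u) - (t₀ + s) • y =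
              ((f (x + s • u) - f x) - s • y) + (f x - t₀ • y) := by
            module
          calc gradedNorm κ j (f (x + s • u) - (t₀ + s) • y)
              ≤ gradedNorm κ j ((f (x + s • u) - f x) - s • y)
                + gradedNorm κ j (f x - t₀ • y) := by
                rw [hdecomp]; exact NME.gradedNorm_add_le κ j _ _
            _ ≤ ε * s + ε * t₀ := add_le_add (hrem j hj) (hx2 j hj)
            _ = ε * (t₀ + s) := by ring
      have := le_csSup hbdd hmemT
      linarith
  -- final extraction
  choose xs h1 h2 using fun k : ℕ => key k (1 / (k + 1))
    (by positivity) (by rw [div_le_one (by positivity)]; linarith [Nat.cast_nonneg (α := ℝ) k])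
  obtain ⟨z, hz1, φ, hφ, hconv⟩ := NME.graded_seq_compact ι hιcpt β xs h1
  have hρ : Tendsto (fun k => gradedRho ι z (xs (φ k))) atTop (𝓝 0) :=
    NME.rho_tendsto_zero ι hconv
  have hfρ : Tendsto (fun k => gradedRho κ (f z) (f (xs (φ k)))) atTop (𝓝 0) :=
    fcont z _ hρ
  have hflevel : ∀ j, Tendsto (fun k => gradedNorm κ j (f z - f (xs (φ k)))) atTop (𝓝 0) :=
    fun j => NME.level_tendsto_of_rho κ hfρ j
  have hzero : ∀ j, gradedNorm κ j (f z - y) = 0 := by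
    intro j
    have hbnd : Tendsto (fun k : ℕ => (1 : ℝ) / (φ k + 1)) atTop (𝓝 0) := by
      apply tendsto_one_div_add_atTop_nhds_zero_nat.comp hφ.tendsto_atTop |>.congr
      intro k; simp
    have hb : Tendsto (fun k => gradedNorm κ j (f z - f (xs (φ k))) + 1 / (φ k + 1))
        atTop (𝓝 (0 + 0)) := (hflevel j).add hbnd
    rw [add_zero] at hb
    have hle : gradedNorm κ j (f z - y) ≤ 0 := by
      refine ge_of_tendsto hb ?_
      filter_upwards [eventually_ge_atTop j] with k hk
      have hjk : j ≤ φ k := le_trans hk (hφ.le_apply)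
      have hdecomp : f z - y = (f z - f (xs (φ k))) + (f (xs (φ k)) - y) := by module
      calc gradedNorm κ j (f z - y)
          ≤ gradedNorm κ j (f z - f (xs (φ k))) + gradedNorm κ j (f (xs (φ k)) - y) := by
            rw [hdecomp]; exact NME.gradedNorm_add_le κ j _ _
        _ ≤ gradedNorm κ j (f z - f (xs (φ k))) + 1 / (φ k + 1) := by
            linarith [h2 (φ k) j hjk]
    exact le_antisymm hle (NME.gradedNorm_nonneg κ j _)
  refine ⟨z, ?_, hz1⟩
  apply Subtype.ext
  funext j
  have hj0 := hzero j
  have h0 : ((f z : ∀ m, Yc m) j) - ((y : ∀ m, Yc m) j) = 0 := by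
    have : ‖((f z - y : GradedSub Yc κ) : ∀ m, Yc m) j‖ = 0 := hj0
    exact norm_eq_zero.mp this
  exact sub_eq_zero.mp h0
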